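/- arXiv:1306.5007 — 8 statements merged into one kernel-verified Lean document; each statement's English description precedes it below -/
import Mathlib

section
/- Let A be an N×N symmetric matrix over the field with two elements Z_2, and let d = (a_{11}, a_{22}, ..., a_{NN}) be its diagonal vector. Then d lies in the range (column space) of A, i.e., there exists a vector x in Z_2^N with Ax = d. -/
theorem diag_in_range_of_symm_finite (N : ℕ) (A : Matrix (Fin N) (Fin N) (ZMod 2))
    (hA : A.IsSymm) :
    ∃ x : Fin N → ZMod 2, A.mulVec x = fun i => A i i := by
  have key : (fun i => A i i) ∈ LinearMap.range A.mulVecLin := by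
    rw [← Subspace.forall_mem_dualAnnihilator_apply_eq_zero_iff]
    intro φ hφ
    rw [Submodule.mem_dualAnnihilator] at hφ
    set z : Fin N → ZMod 2 := fun i => φ (Pi.single i 1) with hz
    have φeq : ∀ v : Fin N → ZMod 2, φ v = ∑ i, v i * z i := by
      intro v
      conv_lhs => rw [pi_eq_sum_univ v]
      rw [map_sum]
      refine Finset.sum_congr rfl fun i _ => ?_
      rw [map_smul, smul_eq_mul]
      congr 2
      ext j
      simp [Pi.single_apply, eq_comm]
    have h0 : φ (A.mulVec z) = 0 := hφ _ ⟨z, rfl⟩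
    rw [φeq] at h0 ⊢
    have expand : ∑ i, A.mulVec z i * z i = ∑ i, ∑ j, A i j * z j * z i := by
      simp [Matrix.mulVec, dotProduct, Finset.sum_mul]
    rw [expand] at h0
    have hsplit : ∑ i, ∑ j, A i j * z j * z i
        = (∑ i, A i i * z i) + ∑ p ∈ Finset.univ.filter (fun p : Fin N × Fin N => p.1 ≠ p.2), A p.1 p.2 * z p.2 * z p.1 := by
      rw [← Finset.sum_product', Finset.univ_product_univ,
        ← Finset.sum_filter_add_sum_filter_not Finset.univ (fun p : Fin N × Fin N => p.1 = p.2)]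
      congr 1
      rw [Finset.sum_filter, Fintype.sum_prod_type]
      refine Finset.sum_congr rfl fun i _ => ?_
      rw [show (∑ j, if i = j then A i j * z j * z i else 0)
          = ∑ j, if i = j then A i i * z i * z i else 0 from
        Finset.sum_congr rfl fun j _ => by split <;> [subst_vars; skip] <;> rfl]
      rw [Finset.sum_ite_eq Finset.univ i fun _ => A i i * z i * z i]
      simp [mul_assoc, ← sq, ZMod.pow_card]
    have hoff : ∑ p ∈ Finset.univ.filter (fun p : Fin N × Fin N => p.1 ≠ p.2), A p.1 p.2 * z p.2 * z p.1 = 0 := by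
      apply Finset.sum_involution (fun p _ => Prod.swap p)
      · intro p hp
        have hs : A p.2 p.1 = A p.1 p.2 := hA.apply p.1 p.2
        simp only [Prod.swap]
        rw [hs, show A p.1 p.2 * z p.1 * z p.2 = A p.1 p.2 * z p.2 * z p.1 by ring]
        exact CharTwo.add_self_eq_zero _
      · intro p hp hf h
        simp only [Finset.mem_filter] at hp
        exact hp.2 (Prod.ext_iff.mp h).1.symm
      · intro p hp
        simp only [Finset.mem_filter, Finset.mem_univ, true_and] at hp ⊢
        exact fun h => hp h.symm
      · intro p hp; rfl
    rw [hsplit, hoff, add_zero] at h0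
    simpa using h0
  obtain ⟨x, hx⟩ := key
  exact ⟨x, hx⟩
end

section
/- Let G be a finite undirected simple graph possibly with loops (at most one edge between any two vertices, and a vertex may be joined to itself). Then there exists a subset S of the vertices such that for every vertex v, the number of vertices in S adjacent to v (counting v itself if v has a loop and v ∈ S) is odd if and only if v has a loop. -/
/-! The adjacency matrix `A` over `𝔽₂` is symmetric, so its range is the orthogonal complement of
its kernel. For `y` in the kernel, the off-diagonal terms of `yᵀ A y` cancel in pairs and
`yᵢ² = yᵢ`, so `diag A ⬝ y = yᵀ A y = 0`. Hence `diag A` lies in the range of `A`, and the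
support of a preimage is the required set `S`. -/

open Finset Matrix

theorem CharTwo.sum_offDiag_eq_zero_of_symm {ι R : Type*} [CommRing R] [CharP R 2]
    [DecidableEq ι] (s : Finset ι) (f : ι → ι → R) (hf : ∀ i j, f i j = f j i) :
    ∑ p ∈ s.offDiag, f p.1 p.2 = 0 :=
  sum_involution (fun p _ => p.swap)
    (fun p _ => by simp only [Prod.fst_swap, Prod.snd_swap, hf p.2 p.1, CharTwo.add_self_eq_zero])
    (fun p hp _ => by
      rw [mem_offDiag] at hp
      exact fun h => hp.2.2 (congrArg Prod.snd h))
    (fun p hp => by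
      rw [mem_offDiag] at hp ⊢
      exact ⟨hp.2.1, hp.1, Ne.symm hp.2.2⟩)
    (fun p _ => p.swap_swap)

theorem CharTwo.sum_sum_eq_sum_diag_of_symm {ι R : Type*} [CommRing R] [CharP R 2]
    (s : Finset ι) (f : ι → ι → R) (hf : ∀ i j, f i j = f j i) :
    ∑ i ∈ s, ∑ j ∈ s, f i j = ∑ i ∈ s, f i i := by
  classical
  rw [← sum_product' (f := f), ← diag_union_offDiag, sum_union (disjoint_diag_offDiag s),
    sum_diag, CharTwo.sum_offDiag_eq_zero_of_symm s f hf, add_zero]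

theorem Matrix.IsSymm.dotProduct_mulVec_self_of_charTwo {n R : Type*} [Fintype n]
    [CommRing R] [CharP R 2] {A : Matrix n n R} (hA : A.IsSymm) (y : n → R) :
    y ⬝ᵥ A *ᵥ y = ∑ i, A i i * y i ^ 2 := by
  simp only [dotProduct, mulVec, mul_sum]
  rw [CharTwo.sum_sum_eq_sum_diag_of_symm]
  · exact sum_congr rfl fun i _ => by ring
  · intro i j
    rw [hA.apply i j]
    ring

theorem Matrix.exists_mulVec_eq_of_forall_vecMul_eq_zero {m n K : Type*} [Fintype m] [Fintype n]
    [Field K] (A : Matrix m n K) (b : m → K) (hb : ∀ y, y ᵥ* A = 0 → y ⬝ᵥ b = 0) :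
    ∃ x, A *ᵥ x = b := by
  classical
  by_contra! hx
  have hb' : b ∉ LinearMap.range A.mulVecLin := by
    rintro ⟨x, rfl⟩
    exact hx x rfl
  obtain ⟨f, hfb, hf⟩ := Submodule.exists_dual_map_eq_bot_of_notMem hb' inferInstance
  set y := (dotProductEquiv K m).symm f
  have hfy : ∀ z, f z = y ⬝ᵥ z := fun z => by
    rw [← dotProductEquiv_apply_apply K m y z, LinearEquiv.apply_symm_apply]
  have hyA : y ᵥ* A = 0 := by
    funext j
    have hj : f (A *ᵥ Pi.single j 1) = 0 := by
      rw [← Submodule.mem_bot K, ← hf]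
      exact Submodule.mem_map_of_mem (LinearMap.mem_range_self A.mulVecLin _)
    rwa [hfy, dotProduct_mulVec, dotProduct_single_one] at hj
  exact hfb (by rw [hfy]; exact hb y hyA)

theorem Matrix.IsSymm.exists_mulVec_eq_diag {n : Type*} [Fintype n] {A : Matrix n n (ZMod 2)}
    (hA : A.IsSymm) : ∃ x, A *ᵥ x = A.diag := by
  refine A.exists_mulVec_eq_of_forall_vecMul_eq_zero _ fun y hy => ?_
  calc y ⬝ᵥ A.diag = ∑ i, A i i * y i ^ 2 := by
        simp only [dotProduct, diag_apply, ZMod.pow_card, mul_comm]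
    _ = (y ᵥ* A) ⬝ᵥ y := by rw [← hA.dotProduct_mulVec_self_of_charTwo, dotProduct_mulVec]
    _ = 0 := by rw [hy, zero_dotProduct]

theorem Matrix.of_boole_mulVec_boole {V R : Type*} [Fintype V] [NonAssocSemiring R]
    (r : V → V → Prop) [DecidableRel r] (S : Finset V) [DecidablePred (· ∈ S)] (v : V) :
    ((of fun v w => if r v w then (1 : R) else 0) *ᵥ fun u => if u ∈ S then 1 else 0) v =
      #{u ∈ S | r v u} := by
  simp only [mulVec, dotProduct, of_apply, boole_mul, ← ite_and, sum_boole]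
  congr 2
  ext u
  simp only [mem_filter, mem_univ, true_and, and_comm]

theorem ZMod.exists_finset_eq_boole {V : Type*} [Fintype V] [DecidableEq V] (x : V → ZMod 2) :
    ∃ S : Finset V, x = fun u => if u ∈ S then 1 else 0 :=
  ⟨univ.filter (x · = 1), funext fun u => by
    have : ∀ a : ZMod 2, a = if a = 1 then 1 else 0 := by decide
    simpa only [mem_filter, mem_univ, true_and] using this (x u)⟩

theorem finite_lights_out_with_loops_general {V : Type*} [Fintype V]
    (adj : V → V → Prop) [DecidableRel adj] (hsymm : ∀ v w, adj v w → adj w v) :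
    ∃ S : Finset V, ∀ v : V,
      (Odd (S.filter (fun u => adj v u)).card ↔ adj v v) := by
  classical
  set A : Matrix V V (ZMod 2) := of fun v w => if adj v w then 1 else 0
  have hA : A.IsSymm := IsSymm.ext fun v w => by
    simp only [A, of_apply, propext ⟨hsymm v w, hsymm w v⟩]
  obtain ⟨x, hx⟩ := hA.exists_mulVec_eq_diag
  obtain ⟨S, rfl⟩ := ZMod.exists_finset_eq_boole x
  refine ⟨S, fun v => ?_⟩
  rw [← ZMod.natCast_eq_one_iff_odd, ← of_boole_mulVec_boole, hx]
  by_cases h : adj v v <;> simp [A, h]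

theorem finite_lights_out_with_loops {V : Type*} [Fintype V] [DecidableEq V]
    (adj : V → V → Prop) [DecidableRel adj] (hsymm : ∀ v w, adj v w → adj w v) :
    ∃ S : Finset V, ∀ v : V,
      (Odd (S.filter (fun u => adj v u)).card ↔ adj v v) :=
  finite_lights_out_with_loops_general adj hsymm
end

section
/- Let A = [a_{ij}], i,j ∈ ℕ, be an infinite symmetric matrix over Z_2 such that each row contains only finitely many 1's. Then the diagonal vector d = (a_{11}, a_{22}, ...) lies in the range of A: there exists x : ℕ → Z_2 such that for every i, sum over j of a_{ij} x_j = d_i (each such sum is finite, hence well-defined). -/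
private lemma zmod2_cases : ∀ a : ZMod 2, a = 0 ∨ a = 1 := by decide

private lemma zmod2_l1 : ∀ s d a c : ZMod 2, s + a * c = d + a → s = d + a + a * c := by decide

private lemma zmod2_l2 : ∀ d a c : ZMod 2, (d + a + a * c) + a * (c + 1) = d := by decide

private lemma finite_case (S : Finset ℕ) :
    ∀ (A : ℕ → ℕ → ZMod 2), (∀ i j, A i j = A j i) →
    (∀ i j, A i j ≠ 0 → i ∈ S ∧ j ∈ S) →
    ∃ x : ℕ → ZMod 2, ∀ i, ∑ᶠ j, A i j * x j = A i i := by
  induction S using Finset.strongInduction with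
  | _ S ih =>
    intro A hsymm hsupp
    by_cases hd : ∀ i, A i i = 0
    · exact ⟨0, fun i => by simp [hd]⟩
    · push_neg at hd
      obtain ⟨k, hk⟩ := hd
      have hk1 : A k k = 1 := (zmod2_cases _).resolve_left hk
      have hkS : k ∈ S := (hsupp k k hk).1
      set B : ℕ → ℕ → ZMod 2 := fun i j => A i j + A i k * A k j with hB
      have hBsymm : ∀ i j, B i j = B j i := by
        intro i j
        simp only [hB]
        rw [hsymm i j, hsymm i k, hsymm k j]
        ring
      have hBk : ∀ j, B k j = 0 := by
        intro j
        simp only [hB, hk1, one_mul]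
        exact CharTwo.add_self_eq_zero _
      have hBk' : ∀ i, B i k = 0 := fun i => (hBsymm i k).trans (hBk i)
      have hBsupp : ∀ i j, B i j ≠ 0 → i ∈ S.erase k ∧ j ∈ S.erase k := by
        intro i j h
        have hik : i ≠ k := fun e => h (e ▸ hBk j)
        have hjk : j ≠ k := fun e => h (e ▸ hBk' i)
        have : A i j ≠ 0 ∨ A i k * A k j ≠ 0 := by
          by_contra hc
          push_neg at hc
          exact h (by simp only [hB, hc.1, hc.2, add_zero])
        have hiS : i ∈ S ∧ j ∈ S := by
          rcases this with h1 | h1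
          · exact hsupp i j h1
          · have h2 : A i k ≠ 0 := fun e => h1 (by rw [e, zero_mul])
            have h3 : A k j ≠ 0 := fun e => h1 (by rw [e, mul_zero])
            exact ⟨(hsupp i k h2).1, (hsupp k j h3).2⟩
        exact ⟨Finset.mem_erase.2 ⟨hik, hiS.1⟩, Finset.mem_erase.2 ⟨hjk, hiS.2⟩⟩
      obtain ⟨y, hy⟩ := ih (S.erase k) (Finset.erase_ssubset hkS) B hBsymm hBsupp
      -- convert finsums to sums over S
      have hsub : ∀ (C : ℕ → ℕ → ZMod 2), (∀ i j, C i j ≠ 0 → i ∈ S ∧ j ∈ S) →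
          ∀ (i : ℕ) (z : ℕ → ZMod 2),
          ∑ᶠ j, C i j * z j = ∑ j ∈ S, C i j * z j := by
        intro C hC i z
        refine finsum_eq_sum_of_support_subset _ ?_
        intro j hj
        have : C i j ≠ 0 := fun e => hj (by simp [Function.mem_support, e] at hj ⊢)
        exact (hC i j this).2
      have hBS : ∀ i j, B i j ≠ 0 → i ∈ S ∧ j ∈ S := fun i j h =>
        ⟨Finset.mem_of_mem_erase (hBsupp i j h).1, Finset.mem_of_mem_erase (hBsupp i j h).2⟩
      set c : ZMod 2 := ∑ j ∈ S, A k j * y j with hc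
      refine ⟨fun j => y j + if j = k then c + 1 else 0, fun i => ?_⟩
      rw [hsub A hsupp]
      have key : ∑ j ∈ S, B i j * y j = B i i := by rw [← hsub B hBS]; exact hy i
      have expand : ∑ j ∈ S, B i j * y j
          = (∑ j ∈ S, A i j * y j) + A i k * c := by
        simp only [hB, hc, add_mul, Finset.sum_add_distrib, Finset.mul_sum, mul_assoc]
      have hBii : B i i = A i i + A i k := by
        simp only [hB]
        rw [hsymm k i]
        congr 1
        rcases zmod2_cases (A i k) with h | h <;> rw [h] <;> ring
      have hfi : ∑ j ∈ S, A i j * y j = A i i + A i k + A i k * c :=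
        zmod2_l1 _ _ _ _ (expand.symm.trans (key.trans hBii))
      have split : ∑ j ∈ S, A i j * (y j + if j = k then c + 1 else 0)
          = (∑ j ∈ S, A i j * y j) + A i k * (c + 1) := by
        rw [Finset.sum_congr rfl (fun j _ => mul_add (A i j) (y j) _), Finset.sum_add_distrib]
        congr 1
        simp only [mul_ite, mul_zero]
        rw [Finset.sum_ite_eq' S k fun j => A i j * (c + 1), if_pos hkS]
      rw [split, hfi]
      exact zmod2_l2 _ _ _

theorem diag_in_range_of_symm_infinite (A : ℕ → ℕ → ZMod 2)
    (hsymm : ∀ i j, A i j = A j i)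
    (hrow : ∀ i, (Function.support (A i)).Finite) :
    ∃ x : ℕ → ZMod 2, ∀ i, ∑ᶠ j, A i j * x j = A i i := by
  classical
  -- finite truncations
  have step : ∀ n : ℕ, ∃ x : ℕ → ZMod 2, ∀ i ≤ n, ∑ᶠ j, A i j * x j = A i i := by
    intro n
    set T : Finset ℕ := (Finset.range (n + 1)) ∪
      (Finset.range (n + 1)).biUnion (fun i => (hrow i).toFinset) with hT
    have hsT : ∀ i ≤ n, i ∈ T := fun i hi =>
      Finset.mem_union_left _ (Finset.mem_range.2 (Nat.lt_succ_of_le hi))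
    have hrowT : ∀ i ≤ n, ∀ j, A i j ≠ 0 → j ∈ T := by
      intro i hi j hj
      refine Finset.mem_union_right _ (Finset.mem_biUnion.2 ⟨i, Finset.mem_range.2 (Nat.lt_succ_of_le hi), ?_⟩)
      exact (hrow i).mem_toFinset.2 hj
    set A' : ℕ → ℕ → ZMod 2 := fun i j => if i ∈ T ∧ j ∈ T then A i j else 0 with hA'
    have hA'symm : ∀ i j, A' i j = A' j i := by
      intro i j
      simp only [hA', hsymm i j, and_comm]
    have hA'supp : ∀ i j, A' i j ≠ 0 → i ∈ T ∧ j ∈ T := by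
      intro i j h
      by_contra hc
      exact h (by simp [hA', hc])
    obtain ⟨x, hx⟩ := finite_case T A' hA'symm hA'supp
    refine ⟨x, fun i hi => ?_⟩
    have heq : ∀ j, A i j = A' i j := by
      intro j
      by_cases hj : A i j = 0
      · simp only [hA', hj, ite_self]
      · simp [hA', hsT i hi, hrowT i hi j hj]
    calc ∑ᶠ j, A i j * x j = ∑ᶠ j, A' i j * x j := by simp_rw [heq]
      _ = A' i i := hx i
      _ = A i i := (heq i).symm
  choose xs hxs using step
  -- ultrafilter limit
  let U : Ultrafilter ℕ := Ultrafilter.of Filter.atTop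
  have hUle : (U : Filter ℕ) ≤ Filter.atTop := Ultrafilter.of_le _
  set x : ℕ → ZMod 2 := fun j => if {n | xs n j = 1} ∈ U then 1 else 0 with hxdef
  have hx : ∀ j, {n | xs n j = x j} ∈ U := by
    intro j
    by_cases h : {n | xs n j = 1} ∈ U
    · simp [hxdef, h]
    · have h' : {n | xs n j = 1}ᶜ ∈ U := (Ultrafilter.compl_mem_iff_notMem).2 h
      have : {n | xs n j = 1}ᶜ ⊆ {n | xs n j = x j} := by
        intro n hn
        simp only [Set.mem_compl_iff, Set.mem_setOf_eq] at hn
        simp only [Set.mem_setOf_eq, hxdef, if_neg h]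
        exact (zmod2_cases _).resolve_right hn
      exact U.toFilter.mem_of_superset h' this
  refine ⟨x, fun i => ?_⟩
  set F : Finset ℕ := (hrow i).toFinset with hF
  have hNmem : ({n | i ≤ n} ∩ ⋂ j ∈ F, {n | xs n j = x j}) ∈ U := by
    refine Filter.inter_mem (hUle (Filter.mem_atTop i)) ?_
    exact (Filter.biInter_finset_mem F).2 fun j _ => hx j
  obtain ⟨n, hn1, hn2⟩ := Ultrafilter.nonempty_of_mem hNmem
  simp only [Set.mem_iInter] at hn2
  have hsupp1 : (Function.support fun j => A i j * x j) ⊆ ↑F := by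
    intro j hj
    have : A i j ≠ 0 := fun e => hj (by simp [Function.mem_support, e])
    exact (hrow i).mem_toFinset.2 this
  have hsupp2 : (Function.support fun j => A i j * xs n j) ⊆ ↑F := by
    intro j hj
    have : A i j ≠ 0 := fun e => hj (by simp [Function.mem_support, e])
    exact (hrow i).mem_toFinset.2 this
  calc ∑ᶠ j, A i j * x j = ∑ j ∈ F, A i j * x j :=
        finsum_eq_sum_of_support_subset _ hsupp1
    _ = ∑ j ∈ F, A i j * xs n j := by
        refine Finset.sum_congr rfl fun j hj => ?_
        rw [hn2 j hj]
    _ = ∑ᶠ j, A i j * xs n j := (finsum_eq_sum_of_support_subset _ hsupp2).symm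
    _ = A i i := hxs n i hn1
end

section
/- Let G be a countable infinite undirected graph in which every vertex has finite degree, with at most one edge between any two vertices, and where a vertex may be connected to itself by a loop. Then there exists a (possibly infinite) set S of vertices such that for every vertex v, the number of vertices in S adjacent to v (including v itself if it has a loop and v ∈ S) is odd if and only if v has a loop. -/
theorem diag_mem_range {n : Type*} [Fintype n] [DecidableEq n]
    (A : Matrix n n (ZMod 2)) (hA : A.IsSymm) :
    ∃ x : n → ZMod 2, A.mulVec x = Matrix.diag A := by
  have hsym : ∀ i j, A j i = A i j := by
    intro i j; rw [← Matrix.transpose_apply A i j, hA]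
  have key : Matrix.diag A ∈ LinearMap.range A.mulVecLin := by
    rw [← Subspace.forall_mem_dualAnnihilator_apply_eq_zero_iff]
    intro φ hφ
    rw [Submodule.mem_dualAnnihilator] at hφ
    set x : n → ZMod 2 := fun i => φ (Pi.single i 1) with hx
    have hφeq : ∀ y : n → ZMod 2, φ y = dotProduct y x := by
      intro y
      have hy : y = ∑ i, y i • Pi.single i 1 := by
        simp [← Pi.single_smul, Finset.univ_sum_single]
      conv_lhs => rw [hy]
      rw [map_sum]
      simp [dotProduct, hx, smul_eq_mul]
    have hker : A.mulVec x = 0 := by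
      funext j
      have h0 : φ (A.mulVec (Pi.single j 1)) = 0 :=
        hφ _ ⟨Pi.single j 1, rfl⟩
      rw [hφeq] at h0
      have hcol : A.mulVec (Pi.single j 1) = fun i => A i j := by
        funext i; simp [Matrix.mulVec_single]
      rw [hcol] at h0
      simp only [dotProduct] at h0
      simp only [Matrix.mulVec, dotProduct, Pi.zero_apply]
      rw [← h0]
      apply Finset.sum_congr rfl
      intro i _
      rw [hsym i j, mul_comm]
    rw [hφeq]
    have sq : ∀ a : ZMod 2, a * a = a := by decide
    have two : ∀ a : ZMod 2, a + a = 0 := by decide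
    have hdot : dotProduct (Matrix.diag A) x
        = dotProduct x (A.mulVec x) := by
      have expand : dotProduct x (A.mulVec x)
          = ∑ p ∈ Finset.univ ×ˢ (Finset.univ : Finset n),
              x p.1 * A p.1 p.2 * x p.2 := by
        rw [Finset.sum_product]
        simp only [dotProduct, Matrix.mulVec, Finset.mul_sum]
        ring_nf
      rw [expand]
      rw [← Finset.sum_filter_add_sum_filter_not (Finset.univ ×ˢ Finset.univ)
        (fun p => p.1 = p.2)]
      have hoff : ∑ p ∈ (Finset.univ ×ˢ Finset.univ).filter
          (fun p : n × n => ¬ p.1 = p.2), x p.1 * A p.1 p.2 * x p.2 = 0 := by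
        apply Finset.sum_involution (fun p _ => (p.2, p.1))
        · intro p hp
          have h1 : x p.2 * A p.2 p.1 * x p.1 = x p.1 * A p.1 p.2 * x p.2 := by
            rw [hsym p.1 p.2]; ring
          show x p.1 * A p.1 p.2 * x p.2 + x p.2 * A p.2 p.1 * x p.1 = 0
          rw [h1]; exact two _
        · intro p hp hne
          simp only [Finset.mem_filter] at hp
          intro hc
          apply hp.2
          have := congrArg Prod.fst hc
          simpa using this.symm
        · intro p hp
          simp only [Finset.mem_filter, Finset.mem_product] at hp ⊢
          exact ⟨⟨Finset.mem_univ _, Finset.mem_univ _⟩, fun h => hp.2 h.symm⟩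
        · intro p hp; rfl
      rw [hoff, add_zero]
      have hdiag : ∑ p ∈ (Finset.univ ×ˢ Finset.univ).filter
          (fun p : n × n => p.1 = p.2), x p.1 * A p.1 p.2 * x p.2
          = ∑ i, x i * A i i * x i := by
        apply Finset.sum_nbij' (fun p => p.1) (fun i => (i, i))
        · intro p hp
          exact Finset.mem_univ _
        · intro i _
          simp
        · intro p hp
          simp only [Finset.mem_filter] at hp
          exact Prod.ext rfl hp.2
        · intro i _; rfl
        · intro p hp
          simp only [Finset.mem_filter] at hp
          rw [hp.2]
      rw [hdiag]
      simp only [dotProduct, Matrix.diag]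
      apply Finset.sum_congr rfl
      intro i _
      rw [mul_comm (x i) (A i i), mul_assoc, sq]
    rw [hdot, hker]
    simp [dotProduct]
  obtain ⟨x, hx⟩ := key
  exact ⟨x, hx⟩

theorem infinite_lights_out_with_loops {V : Type*} [Countable V] [Infinite V]
    (adj : V → V → Prop) (hsymm : ∀ v w, adj v w → adj w v)
    (hfin : ∀ v, {u | adj v u}.Finite) :
    ∃ S : Set V, ∀ v : V,
      (Odd ((S ∩ {u | adj v u}).ncard) ↔ adj v v) := by
  classical
  set N : V → Finset V := fun v => (hfin v).toFinset with hN
  have hmemN : ∀ v u, u ∈ N v ↔ adj v u := by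
    intro v u; simp [hN, Set.Finite.mem_toFinset]
  set C : V → Set (V → Bool) := fun v =>
    {f | Odd (((N v).filter (fun u => f u = true)).card) ↔ adj v v} with hC
  -- each C v is closed
  have hclosed : ∀ v, IsClosed (C v) := by
    intro v
    have hcont : Continuous (fun f : V → Bool =>
        (((N v).filter (fun u => f u = true)).card % 2 : ℕ)) := by
      apply Continuous.comp (continuous_of_discreteTopology (α := ℕ) (f := (· % 2)))
      have : (fun f : V → Bool => ((N v).filter (fun u => f u = true)).card)
          = fun f : V → Bool => ∑ u ∈ N v, (if f u = true then 1 else 0) := by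
        funext f; rw [Finset.sum_boole]; simp
      rw [this]
      apply continuous_finset_sum
      intro u _
      exact Continuous.comp (continuous_of_discreteTopology (α := Bool)
        (f := fun b => if b = true then 1 else 0)) (continuous_apply u)
    have : C v = (fun f : V → Bool =>
        (((N v).filter (fun u => f u = true)).card % 2 : ℕ)) ⁻¹'
          {if adj v v then 1 else 0} := by
      ext f
      by_cases hv : adj v v <;>
        simp [hC, hv, Nat.odd_iff, Nat.not_odd_iff, Nat.mod_two_ne_one]
    rw [this]
    exact (isClosed_singleton).preimage hcont
  -- finite intersection property
  have hfip : ∀ F : Finset V, (Set.univ ∩ ⋂ v ∈ F, C v).Nonempty := by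
    intro F
    set W : Finset V := F ∪ F.biUnion N with hW
    set A : Matrix ↥W ↥W (ZMod 2) :=
      fun u w => if adj u.1 w.1 then 1 else 0 with hA
    have hAsymm : A.IsSymm := by
      ext u w
      simp only [Matrix.transpose_apply, hA]
      exact if_congr ⟨hsymm _ _, hsymm _ _⟩ rfl rfl
    obtain ⟨x, hx⟩ := diag_mem_range A hAsymm
    set f : V → Bool := fun u => if h : u ∈ W then decide (x ⟨u, h⟩ = 1) else false
      with hf
    refine ⟨f, Set.mem_univ _, Set.mem_iInter₂.mpr fun v hv => ?_⟩
    have hvW : v ∈ W := Finset.mem_union_left _ hv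
    have hNW : ∀ u, adj v u → u ∈ W := by
      intro u hu
      exact Finset.mem_union_right _ (Finset.mem_biUnion.mpr ⟨v, hv, (hmemN v u).mpr hu⟩)
    -- the key computation
    have hmv := congrFun hx ⟨v, hvW⟩
    have hlhs : A.mulVec x ⟨v, hvW⟩
        = ((Finset.univ.filter
            (fun u : ↥W => adj v u.1 ∧ x u = 1)).card : ZMod 2) := by
      rw [← Finset.sum_boole]
      simp only [Matrix.mulVec, dotProduct, hA]
      apply Finset.sum_congr rfl
      intro u _
      by_cases h1 : adj v u.1
      · by_cases h2 : x u = 1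
        · simp [h1, h2]
        · have h0 : x u = 0 := by
            revert h2; generalize x u = a; revert a; decide
          simp [h1, h2, h0]
      · simp [h1]
    have hjmem : ∀ w ∈ (N v).filter (fun u => f u = true), w ∈ W := by
      intro w hw
      simp only [Finset.mem_filter, hf] at hw
      by_contra hc
      simp [hc] at hw
    have hcard : (Finset.univ.filter (fun u : ↥W => adj v u.1 ∧ x u = 1)).card
        = ((N v).filter (fun u => f u = true)).card := by
      refine Finset.card_bij' (fun u _ => u.1) (fun w hw => ⟨w, hjmem w hw⟩)
        ?_ ?_ (fun u hu => rfl) (fun w hw => rfl)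
      · intro u hu
        simp only [Finset.mem_filter, Finset.mem_univ, true_and] at hu
        simp only [Finset.mem_filter, hmemN, hf]
        exact ⟨hu.1, by simp [u.2, hu.2]⟩
      · intro w hw
        have hwW := hjmem w hw
        simp only [Finset.mem_filter, hmemN, hf] at hw
        simp only [Finset.mem_filter, Finset.mem_univ, true_and]
        refine ⟨hw.1, ?_⟩
        have := hw.2
        simpa [hwW] using this
    have hdiagv : Matrix.diag A ⟨v, hvW⟩ = if adj v v then 1 else 0 := rfl
    rw [hlhs, hdiagv, hcard] at hmv
    -- conclude parity
    show Odd (((N v).filter (fun u => f u = true)).card) ↔ adj v v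
    have hodd : ∀ m : ℕ, Odd m ↔ ((m : ZMod 2) = 1) := by
      intro m
      rw [Nat.odd_iff, ← ZMod.natCast_mod m 2]
      rcases Nat.mod_two_eq_zero_or_one m with h | h <;> rw [h] <;> simp
    rw [hodd, hmv]
    by_cases hv2 : adj v v <;> simp [hv2]
  -- compactness
  obtain ⟨f, -, hf⟩ := (isCompact_univ (X := V → Bool)).inter_iInter_nonempty C hclosed hfip
  refine ⟨{u | f u = true}, fun v => ?_⟩
  have hmem : f ∈ C v := Set.mem_iInter.mp hf v
  have hset : {u | f u = true} ∩ {u | adj v u}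
      = ↑((N v).filter (fun u => f u = true)) := by
    ext u
    simp [hmemN, and_comm]
  rw [hset, Set.ncard_coe_finset]
  exact hmem
end

section
/- Let G be a countable locally finite undirected simple graph without loops. Define the 'closed neighborhood' toggle matrix B over Z_2 by b_{vv} = 1 for all v and b_{vw} = 1 iff v and w are adjacent. Then B is symmetric and row-finite, and its diagonal vector (the all-ones vector) lies in its range: there is a set S of vertices such that every vertex v has an odd number of vertices of S in its closed neighborhood. -/
open Finset in
lemma zmod2_symm_diag_in_range {F : Type*} [Fintype F] [DecidableEq F]
    (M : Matrix F F (ZMod 2)) (hsymm : ∀ i j, M i j = M j i) (hdiag : ∀ i, M i i = 1) :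
    ∃ x : F → ZMod 2, M.mulVec x = fun _ => 1 := by
  by_contra h
  push_neg at h
  have hmem : (fun _ => (1 : ZMod 2)) ∉ LinearMap.range M.mulVecLin := by
    rintro ⟨x, hx⟩
    exact h x hx
  obtain ⟨φ, hφ1, hφ2⟩ := Submodule.exists_dual_map_eq_bot_of_notMem hmem inferInstance
  set y : F → ZMod 2 := fun i => φ (Pi.single i 1) with hy
  have hφeq : ∀ z : F → ZMod 2, φ z = ∑ i, z i * y i := by
    intro z
    have hz : z = ∑ i, z i • Pi.single i (1 : ZMod 2) := by
      ext j
      simp [Pi.single_apply]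
    calc φ z = φ (∑ i, z i • Pi.single i (1 : ZMod 2)) := by rw [← hz]
    _ = ∑ i, z i * y i := by rw [map_sum]; simp [hy, smul_eq_mul]
  have hker : ∀ z, φ (M.mulVec z) = 0 := by
    intro z
    have : φ (M.mulVec z) ∈ Submodule.map φ (LinearMap.range M.mulVecLin) :=
      Submodule.mem_map_of_mem ⟨z, rfl⟩
    rw [hφ2] at this
    simpa using this
  -- M *ᵥ y = 0
  have hMy : ∀ j, ∑ i, M i j * y i = 0 := by
    intro j
    have := hker (Pi.single j 1)
    rw [hφeq] at this
    simpa [Matrix.mulVec, dotProduct, Pi.single_apply, mul_comm] using this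
  -- expand y ⬝ M y
  have hself : ∀ a : ZMod 2, a * a = a := by decide
  have haddself : ∀ a : ZMod 2, a + a = 0 := by decide
  have key : (0 : ZMod 2) = ∑ i, y i := by
    have e1 : (0 : ZMod 2) = ∑ j, (∑ i, M i j * y i) * y j := by
      simp [hMy]
    rw [e1]
    have e2 : ∑ j, (∑ i, M i j * y i) * y j
        = ∑ p ∈ univ ×ˢ univ, y p.1 * M p.1 p.2 * y p.2 := by
      rw [Finset.sum_product_right]
      congr 1; ext j
      rw [Finset.sum_mul]
      congr 1; ext i
      ring
    rw [e2, ← Finset.sum_filter_add_sum_filter_not (univ ×ˢ univ) (fun p => p.1 = p.2)]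
    have ediag : ∑ p ∈ (univ ×ˢ univ).filter (fun p => p.1 = p.2),
        y p.1 * M p.1 p.2 * y p.2 = ∑ i, y i := by
      refine Finset.sum_nbij' (fun p => p.1) (fun i => (i, i)) ?_ ?_ ?_ ?_ ?_ <;>
        simp +contextual [hdiag, hself]
    have eoff : ∑ p ∈ (univ ×ˢ univ).filter (fun p => ¬ p.1 = p.2),
        y p.1 * M p.1 p.2 * y p.2 = 0 := by
      refine Finset.sum_involution (fun p _ => (p.2, p.1)) ?_ ?_ ?_ ?_
      · intro p hp
        rw [hsymm p.2 p.1]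
        have : y p.2 * M p.1 p.2 * y p.1 = y p.1 * M p.1 p.2 * y p.2 := by ring
        rw [this, haddself]
      · intro p hp _
        simp only [Finset.mem_filter] at hp
        intro hcon
        exact hp.2 (congrArg Prod.snd hcon)
      · intro p hp
        simp only [Finset.mem_filter, Finset.mem_product] at hp ⊢
        exact ⟨⟨Finset.mem_univ _, Finset.mem_univ _⟩, fun hc => hp.2 hc.symm⟩
      · intro p hp; rfl
    rw [ediag, eoff, add_zero]
  apply hφ1
  rw [hφeq]
  simpa using key.symm

lemma odd_of_natCast_eq_one (n : ℕ) (h : ((n : ZMod 2)) = 1) : Odd n := by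
  rcases Nat.even_or_odd n with he | ho
  · obtain ⟨k, hk⟩ := he
    subst hk
    push_cast at h
    rw [← two_mul] at h
    have h2 : (2 : ZMod 2) = 0 := by decide
    rw [h2, zero_mul] at h
    exact absurd h (by decide)
  · exact ho

theorem all_ones_problem_countable {V : Type*} [Countable V] [DecidableEq V]
    (G : SimpleGraph V) [DecidableRel G.Adj]
    (hfin : ∀ v, (G.neighborSet v).Finite) :
    (∀ v w : V, (if v = w ∨ G.Adj v w then (1 : ZMod 2) else 0) =
        (if w = v ∨ G.Adj w v then (1 : ZMod 2) else 0)) ∧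
    (∀ v : V, (Function.support (fun w => if v = w ∨ G.Adj v w then (1 : ZMod 2) else 0)).Finite) ∧
    ∃ S : Set V, ∀ v : V, Odd ((S ∩ insert v (G.neighborSet v)).ncard) := by
  classical
  refine ⟨?_, ?_, ?_⟩
  · intro v w
    have hiff : (v = w ∨ G.Adj v w) ↔ (w = v ∨ G.Adj w v) := by rw [eq_comm, G.adj_comm]
    simp only [hiff]
  · intro v
    apply Set.Finite.subset ((hfin v).insert v)
    intro w hw
    rw [Function.mem_support] at hw
    by_contra hni
    apply hw
    rw [if_neg]
    rintro (rfl | hadj)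
    · exact hni (Set.mem_insert _ _)
    · exact hni (Set.mem_insert_of_mem _ hadj)
  · set N : V → Finset V := fun v => insert v (hfin v).toFinset with hN
    have hNcoe : ∀ v, (↑(N v) : Set V) = insert v (G.neighborSet v) := by
      intro v; simp [hN, Set.Finite.coe_toFinset]
    have hmemN : ∀ v w, w ∈ N v ↔ (v = w ∨ G.Adj v w) := by
      intro v w
      simp [hN, Set.Finite.mem_toFinset, eq_comm]
    -- finite case: solution on each finite set of constraints
    have hW : ∀ W : Finset V, ∃ x : V → Bool,
        ∀ v ∈ W, Odd (({w | x w = true} ∩ ↑(N v)).ncard) := by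
      intro W
      set F : Finset V := W.biUnion N with hF
      have hNF : ∀ v ∈ W, N v ⊆ F := fun v hv => Finset.subset_biUnion_of_mem N hv
      set M : Matrix ↥F ↥F (ZMod 2) :=
        (fun a b => if (a : V) = (b : V) ∨ G.Adj a b then 1 else 0) with hM
      have hsymm : ∀ i j : ↥F, M i j = M j i := by
        intro i j
        have hiff : ((i:V) = (j:V) ∨ G.Adj i j) ↔ ((j:V) = (i:V) ∨ G.Adj j i) := by
          rw [eq_comm, G.adj_comm]
        simp only [hM, hiff]
      have hdiag : ∀ i : ↥F, M i i = 1 := by intro i; simp [hM]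
      obtain ⟨x, hx⟩ := zmod2_symm_diag_in_range M hsymm hdiag
      set χ : V → Bool := (fun w => if h : w ∈ F then decide (x ⟨w, h⟩ = 1) else false) with hχ
      refine ⟨χ, fun v hv => ?_⟩
      have hvF : v ∈ F := hNF v hv ((hmemN v v).2 (Or.inl rfl))
      have h1 : ∑ b : ↥F, M ⟨v, hvF⟩ b * x b = 1 := by
        have := congrFun hx ⟨v, hvF⟩
        simpa [Matrix.mulVec, dotProduct] using this
      set f : V → ZMod 2 :=
        (fun w => if w ∈ N v then (if χ w = true then 1 else 0) else 0) with hf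
      have h2 : ∑ b : ↥F, M ⟨v, hvF⟩ b * x b = ∑ w ∈ F, f w := by
        rw [← Finset.sum_coe_sort F f]
        apply Finset.sum_congr rfl
        intro b _
        have hxb : x b = if χ (b : V) = true then 1 else 0 := by
          rw [hχ]
          simp only [dif_pos b.2]
          rcases (by decide : ∀ a : ZMod 2, a = 0 ∨ a = 1) (x b) with h0 | h1'
          · simp [h0]
          · simp [h1']
        by_cases hmem : (b : V) ∈ N v
        · have hcond : v = (b : V) ∨ G.Adj v (b : V) := (hmemN v b).1 hmem
          simp only [hM, hf, if_pos hcond, if_pos hmem, one_mul, hxb]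
        · have hcond : ¬ (v = (b : V) ∨ G.Adj v (b : V)) := fun hc => hmem ((hmemN v b).2 hc)
          simp only [hM, hf, if_neg hcond, if_neg hmem, zero_mul]
      have h3 : ∑ w ∈ N v, f w = ∑ w ∈ F, f w :=
        Finset.sum_subset (hNF v hv) (fun w _ hw => by simp [hf, hw])
      have h4 : ∑ w ∈ N v, f w = ∑ w ∈ N v, (if χ w = true then (1 : ZMod 2) else 0) :=
        Finset.sum_congr rfl fun w hw => by simp [hf, hw]
      have hcard : ((((N v).filter (fun w => χ w = true)).card : ℕ) : ZMod 2) = 1 := by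
        rw [Finset.card_filter]
        push_cast
        rw [← h4, h3, ← h2, h1]
      have hodd := odd_of_natCast_eq_one _ hcard
      have hset : {w | χ w = true} ∩ ↑(N v) = ↑((N v).filter fun w => χ w = true) := by
        ext w; simp [hχ, and_comm]
      rw [hset, Set.ncard_coe_finset]
      exact hodd
    -- compactness
    set C : V → Set (V → Bool) :=
      (fun v => {x | Odd (({w | x w = true} ∩ ↑(N v)).ncard)}) with hC
    have hCclosed : ∀ v, IsClosed (C v) := by
      intro v
      rw [← isOpen_compl_iff, isOpen_iff_forall_mem_open]
      intro x hx
      refine ⟨(↑(N v) : Set V).pi (fun w => {x w}), ?_, ?_, ?_⟩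
      · intro y hy
        simp only [Set.mem_pi, Set.mem_singleton_iff] at hy
        intro hyC
        apply hx
        have hsets : {w | x w = true} ∩ (↑(N v) : Set V) = {w | y w = true} ∩ ↑(N v) := by
          ext w
          simp only [Set.mem_inter_iff, Set.mem_setOf_eq]
          constructor <;> rintro ⟨h1, h2⟩ <;> refine ⟨?_, h2⟩
          · rw [hy w h2]; exact h1
          · rw [← hy w h2]; exact h1
        simp only [hC, Set.mem_setOf_eq, hsets]
        exact hyC
      · exact isOpen_set_pi (N v).finite_toSet (fun w _ => isOpen_discrete _)
      · simp [Set.mem_pi]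
    set K : Finset V → Set (V → Bool) := (fun W => ⋂ v ∈ W, C v) with hK
    have hKsub : ∀ {W W' : Finset V}, W ⊆ W' → K W' ⊆ K W := by
      intro W W' hww x hx
      simp only [hK, Set.mem_iInter] at hx ⊢
      exact fun v hv => hx v (hww hv)
    have hKdir : Directed (· ⊇ ·) K := by
      intro a b
      exact ⟨a ∪ b, hKsub Finset.subset_union_left, hKsub Finset.subset_union_right⟩
    have hKne : ∀ W, (K W).Nonempty := by
      intro W
      obtain ⟨x, hx⟩ := hW W
      refine ⟨x, ?_⟩
      simp only [hK, Set.mem_iInter]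
      exact fun v hv => hx v hv
    have hKclosed : ∀ W, IsClosed (K W) :=
      fun W => isClosed_biInter (fun v _ => hCclosed v)
    have hKcompact : ∀ W, IsCompact (K W) := fun W => (hKclosed W).isCompact
    obtain ⟨x, hx⟩ := IsCompact.nonempty_iInter_of_directed_nonempty_isCompact_isClosed
      K hKdir hKne hKcompact hKclosed
    refine ⟨{w | x w = true}, fun v => ?_⟩
    have hxv : x ∈ K {v} := Set.mem_iInter.1 hx {v}
    have : x ∈ C v := by
      simp only [hK, Set.mem_iInter] at hxv
      exact hxv v (Finset.mem_singleton_self v)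
    rw [← hNcoe v]
    exact this
end

section
/- Every finite undirected simple graph G (no loops) admits a subset S of vertices such that for each vertex v, the size of the intersection of S with the closed neighborhood of v is odd. (Equivalently: the all-ones vector is in the range over Z_2 of A + I, where A is the adjacency matrix.) -/
open Finset Matrix

lemma symm_ker_aux {V : Type*} [Fintype V] [DecidableEq V]
    (B : Matrix V V (ZMod 2)) (hsym : B.IsSymm) (y : V → ZMod 2)
    (hy : B.mulVec y = 0) : ∑ i, y i * B i i = 0 := by
  have hsq : ∀ a : ZMod 2, a * a = a := by decide
  have h0 : y ⬝ᵥ B.mulVec y = 0 := by rw [hy]; simp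
  have hexp : y ⬝ᵥ B.mulVec y = ∑ p ∈ univ ×ˢ univ, y p.1 * B p.1 p.2 * y p.2 := by
    rw [Finset.sum_product]
    simp [dotProduct, mulVec, Finset.mul_sum, mul_assoc]
  rw [hexp, ← Finset.diag_union_offDiag univ,
    Finset.sum_union (Finset.disjoint_diag_offDiag univ), Finset.sum_diag] at h0
  have hoff : ∑ p ∈ univ.offDiag, y p.1 * B p.1 p.2 * y p.2 = 0 := by
    apply Finset.sum_involution (fun p _ => (p.2, p.1))
    · intro p hp
      have hBs : B p.2 p.1 = B p.1 p.2 := hsym.apply p.1 p.2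
      simp only [hBs]
      ring_nf
      rw [show (2 : ZMod 2) = 0 from rfl, mul_zero]
    · intro p hp _
      simp only [Finset.mem_offDiag] at hp
      intro h
      exact hp.2.2 (congrArg Prod.fst h).symm
    · intro p hp
      simp only [Finset.mem_offDiag] at hp ⊢
      exact ⟨hp.2.1, hp.1, fun h => hp.2.2 h.symm⟩
    · intro p hp; rfl
  rw [hoff, add_zero] at h0
  rw [← h0]
  apply Finset.sum_congr rfl
  intro i _
  conv_lhs => rw [← hsq (y i)]
  ring

lemma diag_mem_range_s11 {V : Type*} [Fintype V] [DecidableEq V]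
    (B : Matrix V V (ZMod 2)) (hsym : B.IsSymm) :
    (fun i => B i i) ∈ LinearMap.range B.mulVecLin := by
  rw [← Subspace.dualAnnihilator_dualCoannihilator_eq
      (W := LinearMap.range B.mulVecLin), Submodule.mem_dualCoannihilator]
  intro φ hφ
  rw [Submodule.mem_dualAnnihilator] at hφ
  set y : V → ZMod 2 := fun i => φ (fun k => if i = k then 1 else 0) with hy
  have hφx : ∀ x : V → ZMod 2, φ x = ∑ i, x i * y i := by
    intro x
    rw [LinearMap.pi_apply_eq_sum_univ φ x]
    simp [smul_eq_mul, hy]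
  have hker : B.mulVec y = 0 := by
    funext j
    have h1 : φ (B.mulVec (fun k => if j = k then 1 else 0)) = 0 :=
      hφ _ ⟨_, rfl⟩
    have h2 : B.mulVec (fun k => if j = k then 1 else 0) = fun i => B i j := by
      funext i
      simp [mulVec, dotProduct, eq_comm]
    rw [h2, hφx] at h1
    have h3 : (B.mulVec y) j = ∑ i, B i j * y i := by
      simp only [mulVec, dotProduct]
      apply Finset.sum_congr rfl
      intro i _
      rw [show B j i = B i j from (hsym.apply j i).symm]
    rw [h3]
    exact h1
  rw [hφx]
  have := symm_ker_aux B hsym y hker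
  rw [← this]
  apply Finset.sum_congr rfl
  intro i _
  ring

lemma odd_of_cast_eq_one (n : ℕ) (h : (n : ZMod 2) = 1) : Odd n := by
  rw [Nat.odd_iff]
  have h2 : ((n % 2 : ℕ) : ZMod 2) = 1 := by rwa [ZMod.natCast_mod]
  rcases Nat.mod_two_eq_zero_or_one n with h0 | h0
  · rw [h0] at h2; simp at h2
  · exact h0

theorem all_ones_problem_finite {V : Type*} [Fintype V] [DecidableEq V]
    (G : SimpleGraph V) [DecidableRel G.Adj] :
    ∃ S : Finset V, ∀ v : V, Odd ((S ∩ insert v (G.neighborFinset v)).card) := by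
  set B : Matrix V V (ZMod 2) := G.adjMatrix (ZMod 2) + 1 with hB
  have hsym : B.IsSymm := by
    rw [hB, Matrix.IsSymm, Matrix.transpose_add, Matrix.transpose_one,
      (G.isSymm_adjMatrix (α := ZMod 2))]
  have hdiag : (fun i => B i i) = fun _ => (1 : ZMod 2) := by
    funext i
    simp [hB, Matrix.one_apply]
  obtain ⟨x, hx⟩ := diag_mem_range_s11 B hsym
  rw [hdiag] at hx
  set S : Finset V := Finset.univ.filter (fun j => x j = 1) with hS
  refine ⟨S, fun v => ?_⟩
  set T : Finset V := insert v (G.neighborFinset v) with hT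
  apply odd_of_cast_eq_one
  have hv : ∑ j, B v j * x j = 1 := by
    have := congrFun hx v
    rw [Matrix.mulVecLin_apply] at this
    exact this
  have hBvj : ∀ j, B v j = if j ∈ T then 1 else 0 := by
    intro j
    by_cases hvj : v = j
    · subst hvj
      simp [hB, Matrix.one_apply, hT]
    · by_cases hadj : G.Adj v j <;>
        simp [hB, Matrix.one_apply, hT, hvj, hadj, Ne.symm hvj]
  have step1 : ∑ j, B v j * x j = ∑ j ∈ T, x j := by
    rw [Finset.sum_congr rfl (fun j _ => by rw [hBvj j, ite_mul, one_mul, zero_mul]),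
      Finset.sum_ite_mem, Finset.univ_inter]
  have hval : ∀ a : ZMod 2, a = if a = 1 then (1 : ZMod 2) else 0 := by decide
  have step2 : ∑ j ∈ T, x j = ((S ∩ T).card : ZMod 2) := by
    have hST : S ∩ T = T.filter (fun j => x j = 1) := by
      ext j
      simp [hS, Finset.mem_filter, and_comm]
    rw [hST]
    rw [Finset.sum_congr rfl (fun j _ => hval (x j)), Finset.sum_ite, Finset.sum_const,
      Finset.sum_const]
    simp
  rw [step1, step2] at hv
  exact hv
end

section
/- Let A : ℕ × ℕ → Z_2 be symmetric and row-finite. For every n there exists x : ℕ → Z_2 with finite support such that sum_j a_{ij} x_j = a_{ii} for all i ≤ n. -/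
open Finset

private lemma zmod2_ne_zero {a : ZMod 2} (h : a ≠ 0) : a = 1 := by
  revert h; revert a; decide

private lemma zmod2_two : (2 : ZMod 2) = 0 := by decide

private lemma key (N : ℕ) : ∀ (m : Type) [Fintype m] [DecidableEq m],
    Fintype.card m ≤ N → ∀ (M : Matrix m m (ZMod 2)), (∀ i j, M i j = M j i) →
    ∃ x : m → ZMod 2, ∀ i, ∑ j, M i j * x j = M i i := by
  induction N with
  | zero =>
      intro m _ _ hcard M _
      have : IsEmpty m := Fintype.card_eq_zero_iff.mp (Nat.le_zero.mp hcard)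
      exact ⟨0, fun i => (this.elim i)⟩
  | succ N ih =>
      intro m _ _ hcard M hsymm
      by_cases hd : ∀ i, M i i = 0
      · exact ⟨0, fun i => by simp [hd]⟩
      · push_neg at hd
        obtain ⟨k, hk⟩ := hd
        have hk1 : M k k = 1 := zmod2_ne_zero hk
        have hcard' : Fintype.card {i : m // i ≠ k} ≤ N := by
          have h1 : Fintype.card {i : m // i ≠ k} < Fintype.card m := by
            apply Fintype.card_subtype_lt (x := k)
            simp
          omega
        set Mk : Matrix {i : m // i ≠ k} {i : m // i ≠ k} (ZMod 2) :=
          fun i j => M i.1 j.1 + M i.1 k * M k j.1 with hMk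
        have hMksymm : ∀ i j, Mk i j = Mk j i := by
          intro i j
          simp only [hMk]
          rw [hsymm i.1 j.1, hsymm i.1 k, hsymm k j.1]
          ring
        obtain ⟨y', hy'⟩ := ih {i : m // i ≠ k} hcard' Mk hMksymm
        set y : m → ZMod 2 := fun i => if h : i = k then 0 else y' ⟨i, h⟩ with hy
        set S : ZMod 2 := ∑ j, M k j * y j with hS
        set c : ZMod 2 := 1 + S with hc
        set x : m → ZMod 2 := fun i => y i + if i = k then c else 0 with hxdef
        have hyk : y k = 0 := by simp [hy]
        have hsub : ∀ g : m → ZMod 2,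
            ∑ j : {j : m // j ≠ k}, g j.1 = ∑ j ∈ Finset.univ.erase k, g j := by
          intro g
          rw [Finset.sum_subtype (p := fun j => j ≠ k) (Finset.univ.erase k)
            (fun x => by simp [Finset.mem_erase]) g]
        have hx : ∀ i, ∑ j, M i j * x j = (∑ j, M i j * y j) + M i k * c := by
          intro i
          have h1 : ∀ j, M i j * x j = M i j * y j + (if j = k then M i k * c else 0) := by
            intro j
            by_cases hj : j = k <;> simp [hxdef, hj, mul_add]
          rw [Finset.sum_congr rfl (fun j _ => h1 j), Finset.sum_add_distrib,
            Finset.sum_ite_eq' Finset.univ k (fun _ => M i k * c)]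
          simp
        refine ⟨x, fun i => ?_⟩
        by_cases hik : i = k
        · subst hik
          rw [hx i, hk1, hc]
          linear_combination S * zmod2_two
        · -- use induction hypothesis at row i
          have E := hy' ⟨i, hik⟩
          have hy'eq : ∀ j : {j : m // j ≠ k}, y' j = y j.1 := by
            intro j
            simp only [hy, dif_neg j.2]
          have hL : ∑ j : {j : m // j ≠ k}, Mk ⟨i, hik⟩ j * y' j
              = (∑ j, M i j * y j) + M i k * S := by
            have h2 : ∀ j : {j : m // j ≠ k}, Mk ⟨i, hik⟩ j * y' j
                = (M i j.1 + M i k * M k j.1) * y j.1 := by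
              intro j; rw [hy'eq j]
            rw [Finset.sum_congr rfl (fun j _ => h2 j),
              hsub (fun j => (M i j + M i k * M k j) * y j)]
            have h4 : ∑ j ∈ Finset.univ.erase k, (M i j + M i k * M k j) * y j
                = ∑ j, (M i j + M i k * M k j) * y j := by
              apply Finset.sum_erase
              rw [hyk]; ring
            rw [h4, hS, Finset.mul_sum]
            rw [← Finset.sum_add_distrib]
            apply Finset.sum_congr rfl
            intro j _
            ring
          rw [hL] at E
          have hE2 : Mk ⟨i, hik⟩ ⟨i, hik⟩ = M i i + M i k * M k i := rfl
          rw [hE2, hsymm k i] at E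
          have hsq : M i k * M i k = M i k := by
            have : ∀ a : ZMod 2, a * a = a := by decide
            exact this _
          rw [hx i, hc]
          linear_combination E + hsq + M i k * zmod2_two

theorem finite_approximation (A : ℕ → ℕ → ZMod 2)
    (hsymm : ∀ i j, A i j = A j i)
    (hrow : ∀ i, (Function.support (A i)).Finite) (n : ℕ) :
    ∃ x : ℕ → ZMod 2, (Function.support x).Finite ∧
      ∀ i ≤ n, ∑ᶠ j, A i j * x j = A i i := by
  obtain ⟨x', hx'⟩ := key (n + 1) (Fin (n + 1)) (by simp)
    (fun i j => A i.1 j.1) (fun i j => hsymm i.1 j.1)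
  refine ⟨fun j => if h : j < n + 1 then x' ⟨j, h⟩ else 0, ?_, ?_⟩
  · apply Set.Finite.subset (Finset.range (n + 1)).finite_toSet
    intro j hj
    simp only [Function.mem_support] at hj
    by_contra hjn
    simp only [Finset.coe_range, Set.mem_Iio, not_lt] at hjn
    exact hj (dif_neg (by omega))
  · intro i hi
    have hi' : i < n + 1 := by omega
    have hsupp : Function.support
        (fun j => A i j * if h : j < n + 1 then x' ⟨j, h⟩ else 0)
        ⊆ ↑(Finset.range (n + 1)) := by
      intro j hj
      simp only [Function.mem_support] at hj
      by_contra hjn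
      simp only [Finset.coe_range, Set.mem_Iio, not_lt] at hjn
      apply hj
      rw [dif_neg (by omega), mul_zero]
    rw [finsum_eq_sum_of_support_subset _ hsupp]
    rw [← Fin.sum_univ_eq_sum_range
      (fun j => A i j * if h : j < n + 1 then x' ⟨j, h⟩ else 0)]
    have := hx' ⟨i, hi'⟩
    calc ∑ j : Fin (n + 1), (A i j * if h : (j : ℕ) < n + 1 then x' ⟨j, h⟩ else 0)
        = ∑ j : Fin (n + 1), A i j * x' j := by
          apply Finset.sum_congr rfl
          intro j _
          rw [dif_pos j.isLt]
      _ = A i i := this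
end

section
/- Let A : ℕ × ℕ → Z_2 be a symmetric row-finite matrix and suppose every finite 'truncated' system sum_{j ≤ M} a_{ij} x_j = a_{ii} (i ≤ n, for appropriate M depending on n) has a solution. Then the full infinite system Ax = d has a solution x : ℕ → Z_2, where d is the diagonal vector. -/
/-!
With `ZMod 2` discrete, `ℕ → ZMod 2` is compact by Tychonoff. Since each row is finite,
each equation `∑ᶠ j, A i j * x j = A i i` depends on finitely many coordinates of `x` and so cuts
out a closed set. The truncated solutions show that every finite family of these closed sets has
nonempty intersection, so by compactness they all do.
-/

open Function

theorem nonempty_iInter_of_forall_nonempty_biInter_le {X : Type*} [TopologicalSpace X]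
    [CompactSpace X] {C : ℕ → Set X} (hC : ∀ i, IsClosed (C i))
    (h : ∀ n, (⋂ i ≤ n, C i).Nonempty) : (⋂ i, C i).Nonempty := by
  rw [Set.nonempty_iff_ne_empty]
  intro hempty
  obtain ⟨u, hu⟩ := isCompact_univ.elim_finite_subfamily_closed C hC (by rw [hempty]; simp)
  obtain ⟨x, hx⟩ := h (u.sup id)
  refine (Set.eq_empty_iff_forall_notMem.1 hu x) ⟨trivial, Set.mem_iInter₂.2 fun i hi => ?_⟩
  exact Set.mem_iInter₂.1 hx i (Finset.le_sup (f := id) hi)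

theorem isClosed_setOf_finsum_mul_eq {ι R : Type*} [Semiring R] [TopologicalSpace R]
    [IsTopologicalSemiring R] [T1Space R] {a : ι → R} (ha : (support a).Finite) (b : R) :
    IsClosed {x : ι → R | ∑ᶠ j, a j * x j = b} := by
  have hsum : ∀ x : ι → R, ∑ᶠ j, a j * x j = ∑ j ∈ ha.toFinset, a j * x j := fun x =>
    finsum_eq_sum_of_support_subset _
      ((support_mul_subset_left a x).trans ha.coe_toFinset.symm.subset)
  simp only [hsum]
  exact isClosed_singleton.preimage (by fun_prop)

theorem finsum_eq_sum_range_of_eq_zero {M : Type*} [AddCommMonoid M] {f : ℕ → M} {N : ℕ}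
    (hf : ∀ j, N < j → f j = 0) : ∑ᶠ j, f j = ∑ j ∈ Finset.range (N + 1), f j :=
  finsum_eq_sum_of_support_subset f fun j hj => by
    simpa [Nat.lt_succ_iff] using not_lt.1 (mt (hf j) hj)

theorem infinite_solution_of_truncated_solutions_general (A : ℕ → ℕ → ZMod 2)
    (hrow : ∀ i, (Function.support (A i)).Finite)
    (htrunc : ∀ n : ℕ, ∃ M : ℕ, n ≤ M ∧ (∀ i ≤ n, ∀ j, M < j → A i j = 0) ∧
      ∃ x : ℕ → ZMod 2, ∀ i ≤ n, ∑ j ∈ Finset.range (M + 1), A i j * x j = A i i) :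
    ∃ x : ℕ → ZMod 2, ∀ i, ∑ᶠ j, A i j * x j = A i i := by
  have hfinite : ∀ n, (⋂ i ≤ n, {x : ℕ → ZMod 2 | ∑ᶠ j, A i j * x j = A i i}).Nonempty := by
    intro n
    obtain ⟨M, -, hzero, x, hx⟩ := htrunc n
    refine ⟨x, Set.mem_iInter₂.2 fun i hi => ?_⟩
    have hvanish : ∀ j, M < j → A i j * x j = 0 := fun j hj => by rw [hzero i hi j hj, zero_mul]
    rw [Set.mem_ofPred_eq, finsum_eq_sum_range_of_eq_zero hvanish]
    exact hx i hi
  obtain ⟨x, hx⟩ := nonempty_iInter_of_forall_nonempty_biInter_le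
    (fun i => isClosed_setOf_finsum_mul_eq (hrow i) (A i i)) hfinite
  exact ⟨x, Set.mem_iInter.1 hx⟩

theorem infinite_solution_of_truncated_solutions (A : ℕ → ℕ → ZMod 2)
    (hsymm : ∀ i j, A i j = A j i)
    (hrow : ∀ i, (Function.support (A i)).Finite)
    (htrunc : ∀ n : ℕ, ∃ M : ℕ, n ≤ M ∧ (∀ i ≤ n, ∀ j, M < j → A i j = 0) ∧
      ∃ x : ℕ → ZMod 2, ∀ i ≤ n, ∑ j ∈ Finset.range (M + 1), A i j * x j = A i i) :
    ∃ x : ℕ → ZMod 2, ∀ i, ∑ᶠ j, A i j * x j = A i i :=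
  infinite_solution_of_truncated_solutions_general A hrow htrunc
end
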